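/- arXiv:2006.07549 — 3 statements merged into one kernel-verified Lean document; each statement's English description precedes it below -/
import Mathlib

section
/- Under the same setup, the variance of the one-sample REINFORCE estimator η_{a,g} equals (1/k² + 2/k⁵ − 2/k³ − 1/k⁴)·δ_{a,g} + 1/k⁴ − 1/k⁶. -/
open BigOperators

/-
Summing over the pair `(g', b)`, the two indicators leave the single term `g' = b = g`, so both
moments reduce to powers of `δ_{a,g} − 1/k`. The variance then factors as
`(δ_{a,g} − 1/k)² (1/k² − 1/k⁴)`, and `δ_{a,g}² = δ_{a,g}` makes this the stated polynomial in `1/k`.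
-/

theorem Fintype.sum_sum_ite_eq_mul_ite_eq {ι R M : Type*} [Fintype ι] [DecidableEq ι]
    [MulZeroOneClass R] [AddCommMonoid M] (φ : R → M) (hφ : φ 0 = 0) (x : ι → R) (g : ι) :
    ∑ g' : ι, ∑ b : ι, φ ((if b = g' then 1 else 0) * (if g = g' then 1 else 0) * x b) =
      φ (x g) := by
  rw [Fintype.sum_eq_single g fun g' hg' => by simp [Ne.symm hg', hφ],
    Fintype.sum_eq_single g fun b hb => by simp [hb, hφ]]
  simp

theorem reinforce_estimator_variance_general (k : ℕ) (a g : Fin k) :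
    (1 / (k : ℝ)^2) *
      (∑ g' : Fin k, ∑ b : Fin k,
        ((if b = g' then (1:ℝ) else 0) * (if g = g' then 1 else 0) *
          ((if a = b then 1 else 0) - 1 / k))^2)
    - ((1 / (k : ℝ)^2) *
      ∑ g' : Fin k, ∑ b : Fin k,
        (if b = g' then (1:ℝ) else 0) * (if g = g' then 1 else 0) *
          ((if a = b then 1 else 0) - 1 / k))^2
    = (1 / (k : ℝ)^2 + 2 / k^5 - 2 / k^3 - 1 / k^4) * (if a = g then 1 else 0)
        + 1 / k^4 - 1 / k^6 := by
  rw [Fintype.sum_sum_ite_eq_mul_ite_eq (· ^ 2) (zero_pow two_ne_zero),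
    Fintype.sum_sum_ite_eq_mul_ite_eq (fun y => y) rfl]
  have hδ : (if a = g then (1:ℝ) else 0) ^ 2 = if a = g then 1 else 0 := by
    split_ifs <;> norm_num
  linear_combination (1 / (k : ℝ)^2 - 1 / k^4) * hδ

/-- Variance of the one-sample REINFORCE gradient estimator
`η_{a,g}(g',b) = 1[b=g']·δ_{g,g'}·(δ_{a,b} − 1/k)` with `g'` and `b`
independent uniform on the `k` goals/actions:
`Var = (1/k² + 2/k⁵ − 2/k³ − 1/k⁴)·δ_{a,g} + 1/k⁴ − 1/k⁶`. -/
theorem reinforce_estimator_variance (k : ℕ) (hk : 0 < k) (a g : Fin k) :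
    (1 / (k : ℝ)^2) *
      (∑ g' : Fin k, ∑ b : Fin k,
        ((if b = g' then (1:ℝ) else 0) * (if g = g' then 1 else 0) *
          ((if a = b then 1 else 0) - 1 / k))^2)
    - ((1 / (k : ℝ)^2) *
      ∑ g' : Fin k, ∑ b : Fin k,
        (if b = g' then (1:ℝ) else 0) * (if g = g' then 1 else 0) *
          ((if a = b then 1 else 0) - 1 / k))^2
    = (1 / (k : ℝ)^2 + 2 / k^5 - 2 / k^3 - 1 / k^4) * (if a = g then 1 else 0)
        + 1 / k^4 - 1 / k^6 :=
  reinforce_estimator_variance_general k a g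
end

section
/- In the one-step MDP with a uniformly random initial policy, under the hindsight distribution—where the action b is drawn uniformly from {1,…,k} and the goal g' is set equal to b (relabeled in hindsight, so r(s,b,g') = 1 always)—the normalized hindsight REINFORCE estimator η^h_{a,g} = r(s,b,g')·∂/∂L_{a,g} log π(b|s,g')/k satisfies E[η^h_{a,g}] = (1/k²)·(δ_{a,g}·(1 − 1/k)) = (1/k²)δ_{a,g} + o(1/k²), and its variance satisfies Var(η^h_{a,g}) = (1/k³)δ_{a,g} + o(1/k³). -/
open BigOperators Filter Topology

/-! The estimator vanishes unless `b = g`, so both moments collapse to the single term `b = g`: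
with `n` actions, `t = 1/n` and `δ = δ_{a,g}`, the mean is `t² (δ - t)` and the second moment `t³ (δ - t)²`.
After rescaling, the errors are `-t` and `(δ - t)² (1 - t) - δ`, which vanish at `t = 0`
because `δ² = δ`. -/

section HindsightEstimator

variable {α : Type*} [DecidableEq α]

noncomputable def hindsightEstimator (n : ℝ) (a g b : α) : ℝ :=
  (if g = b then 1 else 0) * ((if a = b then 1 else 0) - 1 / n) / n

theorem hindsightEstimator_eq_ite (n : ℝ) (a g b : α) :
    hindsightEstimator n a g b =
      if g = b then ((if a = g then 1 else 0) - 1 / n) / n else 0 := by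
  unfold hindsightEstimator
  split_ifs with hgb <;> simp_all

theorem sum_mul_hindsightEstimator [Fintype α] (c n : ℝ) (a g : α) :
    ∑ b, c * hindsightEstimator n a g b = c * (((if a = g then 1 else 0) - 1 / n) / n) := by
  simp [hindsightEstimator_eq_ite]

theorem sum_mul_hindsightEstimator_sq [Fintype α] (c n : ℝ) (a g : α) :
    ∑ b, c * hindsightEstimator n a g b ^ 2 =
      c * (((if a = g then 1 else 0) - 1 / n) / n) ^ 2 := by
  simp [hindsightEstimator_eq_ite, ite_pow]

end HindsightEstimator

theorem hindsight_mean_error_eq (n δ : ℝ) (hn : n ≠ 0) :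
    n ^ 2 * (1 / n * ((δ - 1 / n) / n) - δ / n ^ 2) = -(1 / n) := by
  field_simp
  ring

theorem hindsight_variance_error_eq (n δ : ℝ) (hn : n ≠ 0) :
    n ^ 3 * (1 / n * ((δ - 1 / n) / n) ^ 2 - (1 / n * ((δ - 1 / n) / n)) ^ 2 - δ / n ^ 3) =
      (δ - 1 / n) ^ 2 * (1 - 1 / n) - δ := by
  field_simp

theorem tendsto_apply_one_div_add_one_of_continuous {F : ℝ → ℝ} (hF : Continuous F)
    (hF0 : F 0 = 0) : Tendsto (fun k : ℕ => F (1 / ((k : ℝ) + 1))) atTop (𝓝 0) :=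
  (hF.tendsto' 0 0 hF0).comp tendsto_one_div_add_atTop_nhds_zero_nat

theorem tendsto_apply_indicator_one_div_add_one {F : ℝ → ℝ → ℝ}
    (hF₁ : Continuous (F 1)) (hF₀ : Continuous (F 0)) (h₁ : F 1 0 = 0) (h₀ : F 0 0 = 0)
    (p : ℕ → Prop) [DecidablePred p] :
    Tendsto (fun k : ℕ => F (if p k then 1 else 0) (1 / ((k : ℝ) + 1))) atTop (𝓝 0) := by
  simp only [apply_ite F, ite_apply]
  exact (tendsto_apply_one_div_add_one_of_continuous hF₁ h₁).if'
    (tendsto_apply_one_div_add_one_of_continuous hF₀ h₀)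

/-- The paper's `k` is `k + 1` here, so that the action space is nonempty. -/
theorem hindsight_estimator_mean_variance (a g : ∀ k : ℕ, Fin (k + 1)) :
    Tendsto (fun k : ℕ =>
      ((k : ℝ) + 1)^2 *
        ((∑ b : Fin (k + 1), (1 / ((k : ℝ) + 1)) *
            ((if g k = b then (1:ℝ) else 0) *
              ((if a k = b then 1 else 0) - 1 / ((k : ℝ) + 1)) / ((k : ℝ) + 1)))
          - (if a k = g k then (1:ℝ) else 0) / ((k : ℝ) + 1)^2))
      atTop (nhds 0)
    ∧
    Tendsto (fun k : ℕ =>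
      ((k : ℝ) + 1)^3 *
        (((∑ b : Fin (k + 1), (1 / ((k : ℝ) + 1)) *
            ((if g k = b then (1:ℝ) else 0) *
              ((if a k = b then 1 else 0) - 1 / ((k : ℝ) + 1)) / ((k : ℝ) + 1))^2)
          - (∑ b : Fin (k + 1), (1 / ((k : ℝ) + 1)) *
            ((if g k = b then (1:ℝ) else 0) *
              ((if a k = b then 1 else 0) - 1 / ((k : ℝ) + 1)) / ((k : ℝ) + 1)))^2)
          - (if a k = g k then (1:ℝ) else 0) / ((k : ℝ) + 1)^3))
      atTop (nhds 0) := by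
  have hn : ∀ k : ℕ, (k : ℝ) + 1 ≠ 0 := fun k => by positivity
  have hη : ∀ (k : ℕ) (b : Fin (k + 1)),
      (if g k = b then (1:ℝ) else 0) * ((if a k = b then 1 else 0) - 1 / ((k : ℝ) + 1)) /
        ((k : ℝ) + 1) = hindsightEstimator ((k : ℝ) + 1) (a k) (g k) b := fun _ _ => rfl
  simp only [hη, sum_mul_hindsightEstimator, sum_mul_hindsightEstimator_sq,
    hindsight_mean_error_eq _ _ (hn _), hindsight_variance_error_eq _ _ (hn _)]
  refine ⟨tendsto_apply_one_div_add_one_of_continuous continuous_neg neg_zero, ?_⟩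
  exact tendsto_apply_indicator_one_div_add_one (F := fun δ t => (δ - t) ^ 2 * (1 - t) - δ)
    (by fun_prop) (by fun_prop) (by norm_num) (by norm_num) _
end

section
/- For the hindsight estimator η^h_{a,g} in the diagonal case a = g, the squared relative error Var(η^h_{a,g})/(E[η_{a,g}])² (with E[η_{a,g}] = 1/k² − 1/k³, the mean of the on-policy estimator) grows as k(1+o(1)): the ratio divided by k tends to 1 as k → ∞. Hence the hindsight estimator's relative error is √k(1+o(1)), sublinear in k, compared to the linear growth k(1+o(1)) for the on-policy estimator. -/
open BigOperators Filter

/-! With `n` actions and `a = g`, the hindsight estimator vanishes except at `b = g`, where it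
equals `(1 - 1/n)/n`. Hence `Var η^h = (n - 1)³/n⁶`, while `E[η] = (n - 1)/n³`, so the squared
relative error is exactly `n - 1` and its ratio to `n` tends to `1`. In the statement the
number of actions is `k + 1`. -/

theorem Fintype.sum_mul_apply_indicator_mul {ι : Type*} [Fintype ι] [DecidableEq ι]
    (c : ℝ) (g : ι) (f : ι → ℝ) (φ : ℝ → ℝ) (hφ : φ 0 = 0) :
    ∑ b, c * φ ((if g = b then 1 else 0) * f b) = c * φ (f g) := by
  rw [Fintype.sum_eq_single g fun b hb => by simp [Ne.symm hb, hφ], if_pos rfl, one_mul]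

theorem diag_hindsight_sq_relative_error_div (n : ℝ) :
    (1 / n * ((1 - 1 / n) / n) ^ 2 - (1 / n * ((1 - 1 / n) / n)) ^ 2)
        / (1 / n ^ 2 - 1 / n ^ 3) ^ 2 / n = (n - 1) / n := by
  rcases eq_or_ne n 0 with rfl | hn0
  · simp
  rcases eq_or_ne n 1 with rfl | hn1
  · norm_num
  have hn1' : n - 1 ≠ 0 := sub_ne_zero.mpr hn1
  field_simp

/-- In the diagonal case `a = g`, the squared relative error
`Var(η^h_{a,g})/(E[η_{a,g}])²` of the hindsight estimator
`η^h_{a,g}(b) = δ_{g,b}(δ_{a,b} − 1/k)/k` (with `b` uniform, relative to the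
on-policy mean `E[η_{a,g}] = 1/k² − 1/k³`) grows as `k(1+o(1))`: the ratio
divided by `k` tends to `1`; hence the relative error is `√k(1+o(1))`,
sublinear in `k`. -/
theorem hindsight_relative_error_sublinear (a g : ∀ k : ℕ, Fin (k + 1))
    (hag : ∀ k, a k = g k) :
    Tendsto (fun k : ℕ =>
      ((∑ b : Fin (k + 1),
          (1 / ((k : ℝ) + 1)) *
            ((if g k = b then (1:ℝ) else 0) *
              ((if a k = b then (1:ℝ) else 0) - 1 / ((k : ℝ) + 1)) /
                ((k : ℝ) + 1)) ^ 2)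
        - (∑ b : Fin (k + 1),
            (1 / ((k : ℝ) + 1)) *
              ((if g k = b then (1:ℝ) else 0) *
                ((if a k = b then (1:ℝ) else 0) - 1 / ((k : ℝ) + 1)) /
                  ((k : ℝ) + 1))) ^ 2)
        / (1 / ((k : ℝ) + 1) ^ 2 - 1 / ((k : ℝ) + 1) ^ 3) ^ 2
        / ((k : ℝ) + 1))
      atTop (nhds 1) := by
  refine (tendsto_natCast_div_add_atTop (1 : ℝ)).congr fun k => ?_
  rw [hag k, Fintype.sum_mul_apply_indicator_mul (φ := fun y => (y / ((k : ℝ) + 1)) ^ 2) _ _ _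
      (by simp), Fintype.sum_mul_apply_indicator_mul (φ := fun y => y / ((k : ℝ) + 1)) _ _ _
      (by simp), if_pos rfl, diag_hindsight_sq_relative_error_div, add_sub_cancel_right]
end
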